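/- arXiv:2511.18355 — 4 statements merged into one kernel-verified Lean document; each statement's English description precedes it below -/
import Mathlib

section
/- Let (X,p) be a partial metric space in which p(ξ,ξ) = a for all ξ ∈ X, where a is a fixed positive real number, and let I be an admissible ideal on ℕ. Then for any sequence {ξ_n} in X and any r ≥ 0, the diameter of the rough I-statistical limit set I-st-LIM^r ξ_n is at most 2r + 2a; that is, for any α, β ∈ I-st-LIM^r ξ_n one has p(α,β) ≤ 2r + 2a. -/
/-! Take `ε = a / 2` and density `1 / 2`. Since `I` is admissible and proper, some `n ≥ 1` lies
outside both exceptional sets, so fewer than half of `x 1, …, x n` are `(r + ε)`-far from `α`, and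
likewise for `β`; hence some `x k` is `(r + ε)`-close to both. The modified triangle inequality
through `x k` then gives `p α β ≤ p (x k) α + p (x k) β - a < 2 r + 2 ε + a = 2 r + 2 a`. -/

open Filter Topology

/-- A partial metric on a type `X`. -/
structure PartialMetric (X : Type*) where
  p : X → X → ℝ
  self_nonneg : ∀ x : X, 0 ≤ p x x
  self_le : ∀ x y : X, p x x ≤ p x y
  eq_iff : ∀ x y : X, x = y ↔ (p x x = p x y ∧ p x y = p y y)
  symm : ∀ x y : X, p x y = p y x
  triangle : ∀ x y z : X, p x y ≤ p x z + p z y - p z z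

/-- An admissible nontrivial ideal on ℕ. -/
structure IdealN where
  sets : Set (Set ℕ)
  empty_mem : ∅ ∈ sets
  subset_mem : ∀ A B : Set ℕ, A ∈ sets → B ⊆ A → B ∈ sets
  union_mem : ∀ A B : Set ℕ, A ∈ sets → B ∈ sets → A ∪ B ∈ sets
  admissible : ∀ n : ℕ, ({n} : Set ℕ) ∈ sets
  nontrivial : (Set.univ : Set ℕ) ∉ sets

open Classical in
/-- `cnt A n` = number of `k` with `1 ≤ k ≤ n` and `k ∈ A`. -/
noncomputable def cnt (A : Set ℕ) (n : ℕ) : ℕ :=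
  ((Finset.Icc 1 n).filter (fun k => k ∈ A)).card

/-- `I`-limit of a real sequence. -/
def ILim (I : IdealN) (a : ℕ → ℝ) (L : ℝ) : Prop :=
  ∀ ε > (0 : ℝ), {n : ℕ | ε ≤ |a n - L|} ∈ I.sets

/-- The rough `I`-statistical limit set of degree `r` of a sequence `x`. -/
def RSLim {X : Type*} (I : IdealN) (P : PartialMetric X) (x : ℕ → X) (r : ℝ) : Set X :=
  {ξ | ∀ ε > (0 : ℝ), ∀ δ > (0 : ℝ),
    {n : ℕ | δ ≤ (cnt {k | r + ε ≤ |P.p (x k) ξ - P.p ξ ξ|} n : ℝ) / n} ∈ I.sets}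

lemma cnt_union_le (A B : Set ℕ) (n : ℕ) : cnt (A ∪ B) n ≤ cnt A n + cnt B n := by
  classical
  simp only [cnt, Set.mem_union, Finset.filter_or]
  convert Finset.card_union_le _ _

lemma exists_notMem_of_cnt_lt {A : Set ℕ} {n : ℕ} (h : cnt A n < n) : ∃ k, k ∉ A := by
  classical
  by_contra! hA
  have : cnt A n = n := by
    simp only [cnt, Finset.filter_true_of_mem fun k _ => hA k, Nat.card_Icc, Nat.add_sub_cancel]
  omega

lemma IdealN.exists_pos_notMem_union (I : IdealN) {A B : Set ℕ} (hA : A ∈ I.sets)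
    (hB : B ∈ I.sets) : ∃ n, 0 < n ∧ n ∉ A ∧ n ∉ B := by
  have hAB0 : A ∪ B ∪ {0} ∈ I.sets := I.union_mem _ _ (I.union_mem _ _ hA hB) (I.admissible 0)
  obtain ⟨n, hn⟩ : ∃ n, n ∉ A ∪ B ∪ {0} := by
    by_contra! h
    exact I.nontrivial (Set.eq_univ_of_forall h ▸ hAB0)
  simp only [Set.mem_union, Set.mem_singleton_iff, not_or] at hn
  exact ⟨n, Nat.pos_of_ne_zero hn.2, hn.1⟩

lemma RSLim.exists_close_to_both {X : Type*} {I : IdealN} {P : PartialMetric X} {x : ℕ → X}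
    {r : ℝ} {α β : X} (hα : α ∈ RSLim I P x r) (hβ : β ∈ RSLim I P x r) {ε : ℝ} (hε : 0 < ε) :
    ∃ k, |P.p (x k) α - P.p α α| < r + ε ∧ |P.p (x k) β - P.p β β| < r + ε := by
  set Aα : Set ℕ := {k | r + ε ≤ |P.p (x k) α - P.p α α|}
  set Aβ : Set ℕ := {k | r + ε ≤ |P.p (x k) β - P.p β β|}
  obtain ⟨n, hn, hnα, hnβ⟩ :=
    I.exists_pos_notMem_union (hα ε hε (1 / 2) one_half_pos) (hβ ε hε (1 / 2) one_half_pos)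
  have hnR : (0 : ℝ) < n := Nat.cast_pos.mpr hn
  have half_lt {A : Set ℕ} (h : ¬ (1 / 2 : ℝ) ≤ cnt A n / n) : 2 * (cnt A n : ℝ) < n := by
    rw [not_le, div_lt_iff₀ hnR] at h
    linarith
  have hcnt : cnt (Aα ∪ Aβ) n < n := by
    have hα_half := half_lt hnα
    have hβ_half := half_lt hnβ
    have hsum : cnt Aα n + cnt Aβ n < n := by
      exact_mod_cast (by linarith : (cnt Aα n + cnt Aβ n : ℝ) < n)
    exact (cnt_union_le Aα Aβ n).trans_lt hsum
  obtain ⟨k, hk⟩ := exists_notMem_of_cnt_lt hcnt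
  simp only [Aα, Aβ, Set.mem_union, Set.mem_ofPred_eq, not_or, not_le] at hk
  exact ⟨k, hk⟩

lemma PartialMetric.le_add_sub_self {X : Type*} (P : PartialMetric X) (α β z : X) :
    P.p α β ≤ P.p z α + P.p z β - P.p z z := by
  simpa [P.symm α z] using P.triangle α β z

theorem stmt_1_general {X : Type*} (I : IdealN) (P : PartialMetric X) (x : ℕ → X)
    (a : ℝ) (ha : 0 < a) (hself : ∀ ξ : X, P.p ξ ξ = a)
    (r : ℝ) (α β : X)
    (hα : α ∈ RSLim I P x r) (hβ : β ∈ RSLim I P x r) :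
    P.p α β ≤ 2 * r + 2 * a := by
  obtain ⟨k, hkα, hkβ⟩ := RSLim.exists_close_to_both hα hβ (half_pos ha)
  have htri := P.le_add_sub_self α β (x k)
  rw [hself] at hkα hkβ htri
  linarith [le_abs_self (P.p (x k) α - a), le_abs_self (P.p (x k) β - a)]

theorem stmt_1 {X : Type*} (I : IdealN) (P : PartialMetric X) (x : ℕ → X)
    (a : ℝ) (ha : 0 < a) (hself : ∀ ξ : X, P.p ξ ξ = a)
    (r : ℝ) (hr : 0 ≤ r) (α β : X)
    (hα : α ∈ RSLim I P x r) (hβ : β ∈ RSLim I P x r) :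
    P.p α β ≤ 2 * r + 2 * a :=
  stmt_1_general I P x a ha hself r α β hα hβ
end

section
/- Let (X,p) be a partial metric space, I an admissible ideal on ℕ, and suppose {ξ_n} is I-statistically convergent to ξ (rough degree 0). Then every point η of the closed ball of radius r about ξ satisfying p(η,η) = p(ξ,ξ) belongs to the rough I-statistical limit set of degree r, i.e., {η ∈ X : p(ξ,η) ≤ p(ξ,ξ) + r and p(η,η) = p(ξ,ξ)} ⊆ I-st-LIM^r ξ_n. -/
open Filter Topology

/-! The triangle inequality passes a statistical deviation bound from `ξ` to any `η`, at the
cost of the "excess" `p(ξ,η) - p(η,η)`; the hypotheses on `η` bound this excess by `r`. -/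

theorem PartialMetric.sub_self_nonneg {X : Type*} (P : PartialMetric X) (x y : X) :
    0 ≤ P.p x y - P.p y y := by
  linarith [P.self_le y x, P.symm x y]

theorem PartialMetric.sub_self_le_add {X : Type*} (P : PartialMetric X) (z ξ η : X) :
    P.p z η - P.p η η ≤ (P.p z ξ - P.p ξ ξ) + (P.p ξ η - P.p η η) := by
  linarith [P.triangle z η ξ]

theorem cnt_mono {A B : Set ℕ} (hAB : A ⊆ B) (n : ℕ) : cnt A n ≤ cnt B n := by
  classical
  exact Finset.card_le_card (Finset.monotone_filter_right _ fun _ _ hk => hAB hk)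

theorem IdealN.density_mem_of_subset (I : IdealN) {A B : Set ℕ} (hAB : A ⊆ B) {δ : ℝ}
    (hB : {n : ℕ | δ ≤ (cnt B n : ℝ) / n} ∈ I.sets) :
    {n : ℕ | δ ≤ (cnt A n : ℝ) / n} ∈ I.sets :=
  I.subset_mem _ _ hB fun n (hn : δ ≤ (cnt A n : ℝ) / n) => show δ ≤ (cnt B n : ℝ) / n from
    hn.trans <| div_le_div_of_nonneg_right (by exact_mod_cast cnt_mono hAB n) n.cast_nonneg

theorem mem_RSLim_add_of_mem_RSLim {X : Type*} {I : IdealN} {P : PartialMetric X}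
    {x : ℕ → X} {ξ η : X} {s t : ℝ} (hξ : ξ ∈ RSLim I P x s)
    (ht : P.p ξ η - P.p η η ≤ t) : η ∈ RSLim I P x (s + t) := by
  intro ε hε δ hδ
  refine I.density_mem_of_subset (fun k hk => ?_) (hξ ε hε δ hδ)
  have hdev : |P.p (x k) η - P.p η η| ≤ |P.p (x k) ξ - P.p ξ ξ| + t := by
    rw [abs_of_nonneg (P.sub_self_nonneg _ _)]
    linarith [P.sub_self_le_add (x k) ξ η, le_abs_self (P.p (x k) ξ - P.p ξ ξ)]
  simp only [Set.mem_ofPred_eq] at hk ⊢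
  linarith

theorem stmt_2_general {X : Type*} (I : IdealN) (P : PartialMetric X) (x : ℕ → X) (ξ : X)
    (r : ℝ) (h : ξ ∈ RSLim I P x 0) :
    {η : X | P.p ξ η ≤ P.p ξ ξ + r ∧ P.p η η = P.p ξ ξ} ⊆ RSLim I P x r := by
  rintro η ⟨hball, hself⟩
  simpa only [zero_add] using mem_RSLim_add_of_mem_RSLim (t := r) h (by linarith)

theorem stmt_2 {X : Type*} (I : IdealN) (P : PartialMetric X) (x : ℕ → X) (ξ : X)
    (r : ℝ) (hr : 0 ≤ r) (h : ξ ∈ RSLim I P x 0) :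
    {η : X | P.p ξ η ≤ P.p ξ ξ + r ∧ P.p η η = P.p ξ ξ} ⊆ RSLim I P x r :=
  stmt_2_general I P x ξ r h
end

section
/- Let (X,p) be a partial metric space, I an admissible ideal on ℕ, and r > 0. Suppose {ξ_{i_k}} is a subsequence of {ξ_n} (with i_1 < i_2 < …) such that the I-natural density of the index set {i_k : k ∈ ℕ} equals 1, i.e., I-lim_n (1/n)|{k ∈ ℕ : i_k ≤ n}| = 1. Then I-st-LIM^r ξ_n ⊆ I-st-LIM^r ξ_{i_k}. -/
open Filter Topology

open Finset

/-!
Let `B` be the set of indices at which `x` is at least `r + ε` away from `ξ`. An index `k ∈ [1, n]`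
with `i k ∈ B` either has `i k ≤ n`, and then `i k` is one of the `cnt B n` elements of
`B ∩ [1, n]`, or has `i k > n`, and at most `n + 1 - cnt (range i) n` indices are of that second
kind. After dividing by `n`, the exceptional density of the subsequence is at most that of the
sequence, plus `1 - cnt (range i) n / n`, plus `1 / n`, and each of the three terms is `I`-small.
-/

theorem IdealN.mem_of_finite (I : IdealN) {A : Set ℕ} (h : A.Finite) : A ∈ I.sets := by
  refine Set.Finite.induction_on A h I.empty_mem fun {a s} _ _ ih => ?_
  rw [Set.insert_eq]
  exact I.union_mem _ _ (I.admissible a) ih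

theorem finite_setOf_le_one_div {ε : ℝ} (hε : 0 < ε) : {n : ℕ | ε ≤ 1 / n}.Finite := by
  refine (Set.finite_Iic ⌊1 / ε⌋₊).subset fun n (hn : ε ≤ 1 / n) => ?_
  rcases n.eq_zero_or_pos with rfl | hn0
  · exact Nat.zero_le _
  · refine Nat.le_floor ?_
    rwa [le_div_comm₀ hε (by positivity)] at hn

section StrictMono

variable {i : ℕ → ℕ}

theorem cnt_preimage_le (hi : StrictMono i) (B : Set ℕ) (n : ℕ) :
    cnt (i ⁻¹' B) n ≤ cnt B n + #{k ∈ Icc 1 n | ¬ i k ≤ n} := by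
  classical
  unfold cnt
  rw [← card_filter_add_card_filter_not (s := {k ∈ Icc 1 n | k ∈ i ⁻¹' B}) (fun k => i k ≤ n),
    filter_filter, filter_filter]
  gcongr ?_ + ?_
  · refine card_le_card_of_injOn i (fun k hk => ?_) hi.injective.injOn
    simp only [mem_coe, mem_filter, mem_Icc, Set.mem_preimage] at hk ⊢
    obtain ⟨⟨hk1, -⟩, hkB, hkn⟩ := hk
    exact ⟨⟨hk1.trans hi.le_apply, hkn⟩, hkB⟩
  · exact card_le_card (monotone_filter_right _ fun _ _ hk => hk.2)

theorem cnt_range_le (hi : StrictMono i) (n : ℕ) :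
    cnt (Set.range i) n ≤ #{k ∈ Icc 1 n | i k ≤ n} + 1 := by
  classical
  -- `i 0` may lie in `[1, n]` although `0 ∉ [1, n]`: this is the `+ 1`.
  have hsub : {m ∈ Icc 1 n | m ∈ Set.range i} ⊆ image i (insert 0 {k ∈ Icc 1 n | i k ≤ n}) := by
    rintro m hm
    simp only [mem_filter, mem_Icc, Set.mem_range] at hm
    obtain ⟨⟨-, hmn⟩, k, rfl⟩ := hm
    refine mem_image_of_mem i ?_
    rcases k.eq_zero_or_pos with rfl | hk
    · exact mem_insert_self _ _
    · exact mem_insert_of_mem (mem_filter.2 ⟨mem_Icc.2 ⟨hk, hi.le_apply.trans hmn⟩, hmn⟩)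
  calc cnt (Set.range i) n ≤ #(image i (insert 0 {k ∈ Icc 1 n | i k ≤ n})) := card_le_card hsub
    _ ≤ #(insert 0 {k ∈ Icc 1 n | i k ≤ n}) := card_image_le
    _ ≤ _ := card_insert_le _ _

theorem cnt_preimage_add_cnt_range_le (hi : StrictMono i) (B : Set ℕ) (n : ℕ) :
    cnt (i ⁻¹' B) n + cnt (Set.range i) n ≤ cnt B n + n + 1 := by
  have hsplit := card_filter_add_card_filter_not (s := Icc 1 n) (fun k => i k ≤ n)
  rw [Nat.card_Icc, Nat.add_sub_cancel] at hsplit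
  have := cnt_preimage_le hi B n
  have := cnt_range_le hi n
  omega

theorem cnt_preimage_div_le (hi : StrictMono i) (B : Set ℕ) (n : ℕ) :
    (cnt (i ⁻¹' B) n : ℝ) / n ≤
      (cnt B n : ℝ) / n + (1 - (cnt (Set.range i) n : ℝ) / n) + 1 / n := by
  rcases n.eq_zero_or_pos with rfl | hn
  · simp [cnt]
  have hn' : (n : ℝ) ≠ 0 := by positivity
  have hcount : (cnt (i ⁻¹' B) n : ℝ) ≤ cnt B n + n + 1 - cnt (Set.range i) n := by
    have h := (Nat.cast_le (α := ℝ)).2 (cnt_preimage_add_cnt_range_le hi B n)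
    push_cast at h
    linarith
  calc (cnt (i ⁻¹' B) n : ℝ) / n ≤ (cnt B n + n + 1 - cnt (Set.range i) n) / n := by gcongr
    _ = _ := by field_simp; ring

end StrictMono

theorem stmt_6_general {X : Type*} (I : IdealN) (P : PartialMetric X) (x : ℕ → X)
    (r : ℝ) (i : ℕ → ℕ) (hi : StrictMono i)
    (hdens : ILim I (fun n => (cnt (Set.range i) n : ℝ) / n) 1) :
    RSLim I P x r ⊆ RSLim I P (fun k => x (i k)) r := by
  intro ξ hξ ε hε δ hδ
  set B : Set ℕ := {k | r + ε ≤ |P.p (x k) ξ - P.p ξ ξ|}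
  have hδ3 : 0 < δ / 3 := by positivity
  refine I.subset_mem _ _ (I.union_mem _ _ (I.union_mem _ _ (hξ ε hε _ hδ3) (hdens _ hδ3))
    (I.mem_of_finite (finite_setOf_le_one_div hδ3)))
    fun n (hn : δ ≤ (cnt (i ⁻¹' B) n : ℝ) / n) => ?_
  have hbound := cnt_preimage_div_le hi B n
  have hdev := neg_abs_le ((cnt (Set.range i) n : ℝ) / n - 1)
  simp only [Set.mem_union, Set.mem_ofPred_eq]
  by_contra! h
  linarith [h.1.1, h.1.2, h.2]

theorem stmt_6 {X : Type*} (I : IdealN) (P : PartialMetric X) (x : ℕ → X)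
    (r : ℝ) (hr : 0 < r) (i : ℕ → ℕ) (hi : StrictMono i)
    (hdens : ILim I (fun n => (cnt (Set.range i) n : ℝ) / n) 1) :
    RSLim I P x r ⊆ RSLim I P (fun k => x (i k)) r :=
  stmt_6_general I P x r i hi hdens
end

section
/- Let (X,p) be a partial metric space, I an admissible ideal on ℕ, and let {a_n}, {b_n} be sequences in X with p(a_n,b_n) → 0 as n → ∞. If {a_n} is rough I-statistically convergent to a point a of roughness degree r, and p(a_n,a_n) → 0 as n → ∞, then {b_n} is rough I-statistically convergent to a of roughness degree r. -/
open Filter Topology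

/-! The exceedance set of `b` at level `r + ε` lies, up to the finitely many indices before
`p(aₖ, bₖ)` drops below `ε / 2`, inside the exceedance set of `a` at level `r + ε / 2`, because
`|p(bₖ, a₀) - p(aₖ, a₀)| ≤ p(aₖ, bₖ)`. Adding finitely many indices changes the counting function
by a bounded amount, which is negligible after dividing by `n` except for finitely many `n`, and
finite sets belong to the admissible ideal. -/

theorem IdealN.finite_mem (I : IdealN) {A : Set ℕ} (hA : A.Finite) : A ∈ I.sets := by
  induction A, hA using Set.Finite.induction_on with
  | empty => exact I.empty_mem
  | insert _ _ ih => rw [Set.insert_eq]; exact I.union_mem _ _ (I.admissible _) ih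

theorem cnt_le_add_of_subset_union_Iio {A B : Set ℕ} {N : ℕ} (h : B ⊆ A ∪ Set.Iio N) (n : ℕ) :
    cnt B n ≤ cnt A n + N := by
  classical
  unfold cnt
  calc ((Finset.Icc 1 n).filter (· ∈ B)).card
      ≤ ((Finset.Icc 1 n).filter (· ∈ A) ∪ Finset.range N).card := by
        refine Finset.card_le_card fun k hk => ?_
        simp only [Finset.mem_filter] at hk
        rcases h hk.2 with hA | hN
        · exact Finset.mem_union_left _ (Finset.mem_filter.2 ⟨hk.1, hA⟩)
        · exact Finset.mem_union_right _ (Finset.mem_range.2 hN)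
    _ ≤ ((Finset.Icc 1 n).filter (· ∈ A)).card + N :=
        (Finset.card_union_le _ _).trans_eq (by rw [Finset.card_range])

/-- `I`-statistical density zero; `ξ ∈ RSLim I P x r` says that every set
`{k | r + ε ≤ |p(xₖ, ξ) - p(ξ, ξ)|}` with `ε > 0` is `I.StatNull`. -/
def IdealN.StatNull (I : IdealN) (A : Set ℕ) : Prop :=
  ∀ δ > (0 : ℝ), {n : ℕ | δ ≤ (cnt A n : ℝ) / n} ∈ I.sets

theorem IdealN.StatNull.of_subset_union_Iio {I : IdealN} {A B : Set ℕ} {N : ℕ}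
    (hA : I.StatNull A) (hB : B ⊆ A ∪ Set.Iio N) : I.StatNull B := by
  intro δ hδ
  refine I.subset_mem _ _ (I.union_mem _ _ (hA (δ / 2) (half_pos hδ))
    (I.finite_mem (Set.finite_Iio ⌈2 * N / δ⌉₊))) fun n (hn : δ ≤ (cnt B n : ℝ) / n) => ?_
  have hn_pos : (0 : ℝ) < n := by
    rcases (n.cast_nonneg : (0 : ℝ) ≤ n).eq_or_lt with h | h
    · rw [← h, div_zero] at hn; linarith
    · exact h
  have hcnt : (cnt B n : ℝ) ≤ cnt A n + N := by
    exact_mod_cast cnt_le_add_of_subset_union_Iio hB n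
  rw [le_div_iff₀ hn_pos] at hn
  by_cases hdense : δ / 2 ≤ (cnt A n : ℝ) / n
  · exact Or.inl hdense
  · right
    rw [le_div_iff₀ hn_pos, not_le] at hdense
    rw [Set.mem_Iio, Nat.lt_ceil, lt_div_iff₀ hδ]
    linarith

theorem PartialMetric.abs_sub_le {X : Type*} (P : PartialMetric X) (x y z : X) :
    |P.p x z - P.p y z| ≤ P.p x y := by
  have hxy := P.triangle x z y
  have hyx := P.triangle y z x
  have hsymm := P.symm x y
  have hx := P.self_nonneg x
  have hy := P.self_nonneg y
  rw [abs_le]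
  constructor <;> linarith

theorem stmt_7_general {X : Type*} (I : IdealN) (P : PartialMetric X) (a b : ℕ → X)
    (r : ℝ) (a₀ : X)
    (hab : Filter.Tendsto (fun n => P.p (a n) (b n)) atTop (nhds 0))
    (ha : a₀ ∈ RSLim I P a r) :
    a₀ ∈ RSLim I P b r := by
  intro ε hε
  obtain ⟨N, hN⟩ := eventually_atTop.1 (hab.eventually (gt_mem_nhds (half_pos hε)))
  refine IdealN.StatNull.of_subset_union_Iio (N := N) (ha (ε / 2) (half_pos hε))
    fun k (hk : r + ε ≤ |P.p (b k) a₀ - P.p a₀ a₀|) => ?_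
  rcases lt_or_ge k N with hkN | hkN
  · exact Or.inr hkN
  · left
    have hclose : |P.p (b k) a₀ - P.p (a k) a₀| < ε / 2 :=
      ((P.abs_sub_le (b k) (a k) a₀).trans_eq (P.symm _ _)).trans_lt (hN k hkN)
    have htri := abs_sub_abs_le_abs_sub (P.p (b k) a₀ - P.p a₀ a₀) (P.p (a k) a₀ - P.p a₀ a₀)
    rw [sub_sub_sub_cancel_right] at htri
    show r + ε / 2 ≤ |P.p (a k) a₀ - P.p a₀ a₀|
    linarith

theorem stmt_7 {X : Type*} (I : IdealN) (P : PartialMetric X) (a b : ℕ → X)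
    (r : ℝ) (hr : 0 ≤ r) (a₀ : X)
    (hab : Filter.Tendsto (fun n => P.p (a n) (b n)) atTop (nhds 0))
    (ha : a₀ ∈ RSLim I P a r)
    (haa : Filter.Tendsto (fun n => P.p (a n) (a n)) atTop (nhds 0)) :
    a₀ ∈ RSLim I P b r :=
  stmt_7_general I P a b r a₀ hab ha
end
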